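/- Let H ∈ (0,1) and set K₂ = min{2π², 2π²(1−H²)/(3H²)}. Then for every η ∈ [−π,π], the third eigenvalue Λ⁰₃(η) of the limit problem satisfies Λ⁰₃(η) ≥ min{4π², π²/H²} > π² + K₂. -/
import Mathlib


open Real

/-- The `n`-th eigenvalue (counted with multiplicity, `n ≥ 1`) of the limit
problem: the smallest level `L` below which at least `n` of the values
`Λ⁰_{jk}(η) = (η+2πj)² + π²k²/H²` lie. -/
noncomputable def nthEigen (H η : ℝ) (n : ℕ) : ℝ :=
  sInf {L : ℝ | n ≤ Set.ncard {p : ℤ × ℕ |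
    (η + 2 * π * p.1) ^ 2 + π ^ 2 * (p.2 : ℝ) ^ 2 / H ^ 2 ≤ L}}

/-- The set of indices whose eigenvalue is at most `L`. -/
def eigSet (H η L : ℝ) : Set (ℤ × ℕ) :=
  {p : ℤ × ℕ | (η + 2 * π * p.1) ^ 2 + π ^ 2 * (p.2 : ℝ) ^ 2 / H ^ 2 ≤ L}

lemma abs_int_le_sq (j : ℤ) : (|j| : ℝ) ≤ (j : ℝ) ^ 2 := by
  rcases eq_or_ne j 0 with h | h
  · simp [h]
  · have h1' : (1:ℝ) ≤ |(j:ℝ)| := by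
      have : (1:ℤ) ≤ |j| := Int.one_le_abs h
      exact_mod_cast this
    calc (|j|:ℝ) = |(j:ℝ)| := rfl
      _ ≤ |(j:ℝ)| * |(j:ℝ)| := le_mul_of_one_le_left (abs_nonneg _) h1'
      _ = (j:ℝ)^2 := by rw [← abs_mul, ← sq, abs_sq]

lemma key_quad (η : ℝ) (hAbs : |η| ≤ π) (j : ℝ) :
    4*π^2*j^2 - 4*π^2*|j| ≤ (η + 2*π*j)^2 := by
  have hπ : (0:ℝ) < π := Real.pi_pos
  have e1 : -(π*|j|) ≤ η*j := by
    have h1 := neg_abs_le (η*j)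
    have h2 : |η*j| ≤ π*|j| := by
      rw [abs_mul]; exact mul_le_mul_of_nonneg_right hAbs (abs_nonneg _)
    linarith
  nlinarith [sq_nonneg η, mul_nonneg hπ.le (by linarith : (0:ℝ) ≤ η*j + π*|j|)]

lemma eigSet_finite (H η L : ℝ) (hH0 : 0 < H) : (eigSet H η L).Finite := by
  have hπ : (0:ℝ) < π := Real.pi_pos
  have hH2 : (0:ℝ) < H^2 := by positivity
  apply Set.Finite.subset
    ((Set.finite_Icc (-(⌈(L + |η|^2)/(2*π^2) + 1⌉)) (⌈(L + |η|^2)/(2*π^2) + 1⌉)).prod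
      (Set.finite_Iic (⌈L * H^2 / π^2⌉₊)))
  rintro ⟨j, k⟩ hp
  have hp' : (η + 2 * π * j) ^ 2 + π ^ 2 * (k : ℝ) ^ 2 / H ^ 2 ≤ L := hp
  have h1 : (η + 2 * π * j) ^ 2 ≤ L := by
    have : 0 ≤ π ^ 2 * (k : ℝ) ^ 2 / H ^ 2 := by positivity
    linarith
  have h2 : π ^ 2 * (k : ℝ) ^ 2 / H ^ 2 ≤ L := by
    have : 0 ≤ (η + 2 * π * j) ^ 2 := by positivity
    linarith
  constructor
  · -- bound on j
    have hA : -|η| ≤ η := neg_abs_le η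
    have hA' : η ≤ |η| := le_abs_self η
    have h' : 2*π^2*((j:ℝ)^2 - 1) ≤ L + |η|^2 := by
      have e1 : -(|η| * |(j:ℝ)|) ≤ η * j := by
        rw [← abs_mul]; exact neg_abs_le _
      have e1' : -(4*π*(|η| * |(j:ℝ)|)) ≤ 4*π*(η*(j:ℝ)) := by
        have := mul_le_mul_of_nonneg_left e1 (by positivity : (0:ℝ) ≤ 4*π)
        linarith
      nlinarith [sq_nonneg (|η| - π*|(j:ℝ)|), sq_abs (j:ℝ), sq_abs η, sq_nonneg π]
    have h'' : (j:ℝ)^2 - 1 ≤ (L + |η|^2)/(2*π^2) := by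
      rw [le_div_iff₀ (by positivity)]; linarith
    have hje : (|j| : ℝ) ≤ (L + |η|^2)/(2*π^2) + 1 := by
      have := abs_int_le_sq j
      linarith
    have : (|j| : ℝ) ≤ (⌈(L + |η|^2)/(2*π^2) + 1⌉ : ℝ) := hje.trans (Int.le_ceil _)
    have habs : |j| ≤ ⌈(L + |η|^2)/(2*π^2) + 1⌉ := by exact_mod_cast this
    simpa [Set.mem_Icc] using abs_le.mp habs
  · -- bound on k
    have hk : (k:ℝ) ≤ (k:ℝ)^2 := by
      rcases Nat.eq_zero_or_pos k with h | h
      · simp [h]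
      · have : (1:ℝ) ≤ (k:ℝ) := by exact_mod_cast h
        nlinarith
    have h3 : π^2 * (k:ℝ)^2 ≤ L * H^2 := by
      rw [div_le_iff₀ hH2] at h2
      linarith
    have hk2 : (k:ℝ)^2 ≤ L * H^2 / π^2 := by
      rw [le_div_iff₀ (by positivity : (0:ℝ) < π^2)]
      linarith
    have : (k : ℝ) ≤ (⌈L * H^2 / π^2⌉₊ : ℝ) := by
      calc (k:ℝ) ≤ L * H^2 / π^2 := by linarith
        _ ≤ _ := Nat.le_ceil _
    simpa [Set.mem_Iic] using Nat.cast_le.mp this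

lemma eigSet_three (H η : ℝ) (hH0 : 0 < H) :
    3 ≤ (eigSet H η ((η + 2*π)^2 + η^2 + π^2 / H^2)).ncard := by
  have hπ : (0:ℝ) < π := Real.pi_pos
  have hH2 : (0:ℝ) < H^2 := by positivity
  have hP : (0:ℝ) ≤ π^2/H^2 := by positivity
  have hmem1 : ((0:ℤ), (0:ℕ)) ∈ eigSet H η ((η + 2*π)^2 + η^2 + π^2 / H^2) := by
    show (η + 2 * π * ((0:ℤ):ℝ)) ^ 2 + π ^ 2 * ((0:ℕ) : ℝ) ^ 2 / H ^ 2 ≤ _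
    norm_num
    nlinarith [sq_nonneg (η + 2*π), sq_nonneg η]
  have hmem2 : ((1:ℤ), (0:ℕ)) ∈ eigSet H η ((η + 2*π)^2 + η^2 + π^2 / H^2) := by
    show (η + 2 * π * ((1:ℤ):ℝ)) ^ 2 + π ^ 2 * ((0:ℕ) : ℝ) ^ 2 / H ^ 2 ≤ _
    norm_num
    nlinarith [sq_nonneg η, sq_nonneg (η+2*π)]
  have hmem3 : ((0:ℤ), (1:ℕ)) ∈ eigSet H η ((η + 2*π)^2 + η^2 + π^2 / H^2) := by
    show (η + 2 * π * ((0:ℤ):ℝ)) ^ 2 + π ^ 2 * ((1:ℕ) : ℝ) ^ 2 / H ^ 2 ≤ _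
    norm_num
    nlinarith [sq_nonneg (η + 2*π), sq_nonneg η]
  have hsub : ({((0:ℤ),(0:ℕ)), ((1:ℤ),(0:ℕ)), ((0:ℤ),(1:ℕ))} : Set (ℤ×ℕ)) ⊆
      eigSet H η ((η + 2*π)^2 + η^2 + π^2 / H^2) := by
    intro p hp
    rcases hp with h | h | h <;> subst h <;> assumption
  have h3 : ({((0:ℤ),(0:ℕ)), ((1:ℤ),(0:ℕ)), ((0:ℤ),(1:ℕ))} : Set (ℤ×ℕ)).ncard = 3 := by
    rw [Set.ncard_eq_three]
    exact ⟨_, _, _, by simp [Prod.ext_iff], by simp [Prod.ext_iff], by simp [Prod.ext_iff], rfl⟩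
  rw [← h3]
  exact Set.ncard_le_ncard hsub (eigSet_finite H η _ hH0)

lemma eigSet_le_two (H η L : ℝ) (hH0 : 0 < H) (hη1 : -π ≤ η) (hη2 : η ≤ π)
    (hm1 : L < 4*π^2) (hm2 : L < π^2/H^2) : (eigSet H η L).ncard ≤ 2 := by
  have hπ : (0:ℝ) < π := Real.pi_pos
  have hH2 : (0:ℝ) < H^2 := by positivity
  have hAbs : |η| ≤ π := abs_le.mpr ⟨hη1, hη2⟩
  have hkey : ∀ p ∈ eigSet H η L, p.2 = 0 ∧ (p.1 = 0 ∨ p.1 = 1 ∨ p.1 = -1) := by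
    rintro ⟨j, k⟩ hp
    have hp' : (η + 2 * π * j) ^ 2 + π ^ 2 * (k : ℝ) ^ 2 / H ^ 2 ≤ L := hp
    have hk0 : k = 0 := by
      by_contra h
      have h1 : 1 ≤ k := Nat.one_le_iff_ne_zero.mpr h
      have h1' : (1:ℝ) ≤ (k:ℝ) := by exact_mod_cast h1
      have hk2 : (1:ℝ) ≤ (k:ℝ)^2 := by nlinarith
      have hmono : π^2 * 1 / H^2 ≤ π^2 * (k:ℝ)^2 / H^2 := by gcongr
      rw [mul_one] at hmono
      nlinarith [sq_nonneg (η + 2*π*j)]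
    subst hk0
    refine ⟨rfl, ?_⟩
    have hsq : (η + 2 * π * j) ^ 2 < 4*π^2 := by
      have : π ^ 2 * ((0:ℕ) : ℝ) ^ 2 / H ^ 2 = 0 := by norm_num
      rw [this] at hp'
      linarith
    have hj : |j| ≤ 1 := by
      by_contra h
      push_neg at h
      have h2z : (2:ℤ) ≤ |j| := h
      have h2 : (2:ℝ) ≤ |(j:ℝ)| := by
        rw [← Int.cast_abs]; exact_mod_cast h2z
      nlinarith [key_quad η hAbs (j:ℝ), sq_abs (j:ℝ), pow_pos hπ 2,
        mul_nonneg (sq_nonneg π) (mul_nonneg (by linarith : (0:ℝ) ≤ |(j:ℝ)| - 2)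
          (by linarith : (0:ℝ) ≤ |(j:ℝ)| + 1))]
    rw [abs_le] at hj
    omega
  rcases le_or_gt 0 η with hs | hs
  · have hsub : eigSet H η L ⊆ {((0:ℤ),(0:ℕ)), ((-1:ℤ),(0:ℕ))} := by
      rintro ⟨j, k⟩ hp
      obtain ⟨hk0, hj⟩ := hkey _ hp
      simp only at hk0 hj
      subst hk0
      have hp' : (η + 2 * π * j) ^ 2 + π ^ 2 * ((0:ℕ) : ℝ) ^ 2 / H ^ 2 ≤ L := hp
      rcases hj with h | h | h
      · left; simp [h]
      · exfalso
        subst h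
        norm_num at hp'
        nlinarith [mul_nonneg hs hπ.le, sq_nonneg η]
      · right; simp [h]
    calc (eigSet H η L).ncard ≤ ({((0:ℤ),(0:ℕ)), ((-1:ℤ),(0:ℕ))} : Set (ℤ×ℕ)).ncard :=
          Set.ncard_le_ncard hsub ((Set.finite_singleton _).insert _)
      _ ≤ 2 := by rw [Set.ncard_pair (by simp [Prod.ext_iff])]
  · have hsub : eigSet H η L ⊆ {((0:ℤ),(0:ℕ)), ((1:ℤ),(0:ℕ))} := by
      rintro ⟨j, k⟩ hp
      obtain ⟨hk0, hj⟩ := hkey _ hp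
      simp only at hk0 hj
      subst hk0
      have hp' : (η + 2 * π * j) ^ 2 + π ^ 2 * ((0:ℕ) : ℝ) ^ 2 / H ^ 2 ≤ L := hp
      rcases hj with h | h | h
      · left; simp [h]
      · right; simp [h]
      · exfalso
        subst h
        norm_num at hp'
        nlinarith [mul_nonneg (by linarith : (0:ℝ) ≤ -η) hπ.le, sq_nonneg η]
    calc (eigSet H η L).ncard ≤ ({((0:ℤ),(0:ℕ)), ((1:ℤ),(0:ℕ))} : Set (ℤ×ℕ)).ncard :=
          Set.ncard_le_ncard hsub ((Set.finite_singleton _).insert _)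
      _ ≤ 2 := by rw [Set.ncard_pair (by simp [Prod.ext_iff])]

/-- For `H ∈ (0,1)` and `K₂ = min{2π², 2π²(1−H²)/(3H²)}`:
`Λ⁰₃(η) ≥ min{4π², π²/H²} > π² + K₂` for every `η ∈ [−π,π]`. -/
theorem third_limit_eigenvalue_bound (H : ℝ) (hH : H ∈ Set.Ioo (0:ℝ) 1)
    (η : ℝ) (hη : η ∈ Set.Icc (-π) π) :
    min (4*π^2) (π^2 / H^2) ≤ nthEigen H η 3 ∧
    π^2 + min (2*π^2) (2*π^2*(1-H^2)/(3*H^2)) < min (4*π^2) (π^2 / H^2) := by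
  obtain ⟨hH0, hH1⟩ := hH
  obtain ⟨hη1, hη2⟩ := hη
  have hπ : (0:ℝ) < π := Real.pi_pos
  have hH2 : (0:ℝ) < H^2 := by positivity
  constructor
  · apply le_csInf
    · exact ⟨(η + 2*π)^2 + η^2 + π^2 / H^2, eigSet_three H η hH0⟩
    · rintro L hL
      by_contra hlt
      push_neg at hlt
      have hm1 : L < 4*π^2 := lt_of_lt_of_le hlt (min_le_left _ _)
      have hm2 : L < π^2/H^2 := lt_of_lt_of_le hlt (min_le_right _ _)
      have h2 := eigSet_le_two H η L hH0 hη1 hη2 hm1 hm2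
      have h3 : (3:ℕ) ≤ (eigSet H η L).ncard := hL
      omega
  · rw [lt_min_iff]
    constructor
    · have h1 : min (2*π^2) (2*π^2*(1-H^2)/(3*H^2)) ≤ 2*π^2 := min_le_left _ _
      nlinarith
    · have h1 : min (2*π^2) (2*π^2*(1-H^2)/(3*H^2)) ≤ 2*π^2*(1-H^2)/(3*H^2) := min_le_right _ _
      have h2 : π^2 + 2*π^2*(1-H^2)/(3*H^2) < π^2/H^2 := by
        have hA : π^2 + 2*π^2*(1-H^2)/(3*H^2) = (3*π^2*H^2 + 2*π^2*(1-H^2))/(3*H^2) := by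
          field_simp
        have hB : π^2/H^2 = (3*π^2)/(3*H^2) := by
          rw [mul_div_mul_left _ _ (by norm_num : (3:ℝ) ≠ 0)]
        rw [hA, hB]
        gcongr
        nlinarith [mul_pos (pow_pos hπ 2) (by nlinarith : (0:ℝ) < 1 - H^2)]
      linarith
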